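/- For every extended limit γ on ℓ∞, the functional B defined by Bx = log(2) · γ( n ↦ (1/n) Σ_{k=0}^∞ x_{k+1} 2^{−k/n} ) for x ∈ ℓ∞ is a Banach limit which is not an extreme point of the set 𝔅 of all Banach limits. Hence the set 𝔅_ζ of all Banach limits of this form is disjoint from ext 𝔅. -/

import Mathlib

/-!
With `r = 2 ^ (-1 / (n + 1))` one has `log 2 · (Z x)ₙ = vₙ · (1 - r) ∑ₖ xₖ rᵏ` with `vₙ → 1`,
so `B` is `γ` applied to Abel means taken along `r → 1⁻`. Abel means are positive and
normalised, and the shift multiplies them by `r`, hence `B` is a Banach limit.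

If `0 ≤ m ≤ 1` and `m (k + 1) - m k → 0`, then `x ↦ B (m x) / B m` and
`x ↦ B ((1 - m) x) / B (1 - m)` are Banach limits of which `B` is a proper convex combination,
so an extreme Banach limit satisfies `B (m²) = (B m)²`. The sequence
`mₖ = (1 + cos (2π log₂ (k + 1))) / 2` oscillates across every dyadic block, so its Abel means
have variance bounded below as `r → 1`; by Cauchy–Schwarz for `γ` this gives `(B m)² < B (m²)`.
-/

open Filter BoundedContinuousFunction

noncomputable section

/-- `ℓ∞`: the space of bounded real sequences (indexed from `0`). -/
abbrev LInf : Type := BoundedContinuousFunction ℕ ℝ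

/-- The translation (shift) operator `T(x₁,x₂,…) = (0,x₁,x₂,…)` (0-indexed). -/
def shift (x : LInf) : LInf :=
  BoundedContinuousFunction.ofNormedAddCommGroup
    (fun n => if n = 0 then 0 else x (n - 1)) continuous_of_discreteTopology ‖x‖
    (by
      intro n
      rcases n with _ | n
      · simp [norm_nonneg x]
      · simpa using x.norm_coe_le_norm n)

/-- A Banach limit: a positive, normalised, shift-invariant continuous linear
functional on `ℓ∞`. -/
def IsBanachLimit (B : LInf →L[ℝ] ℝ) : Prop :=
  (∀ x : LInf, (∀ n, 0 ≤ x n) → 0 ≤ B x) ∧ B 1 = 1 ∧ ∀ x : LInf, B (shift x) = B x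

/-- The set `𝔅` of all Banach limits, as a subset of the dual space of `ℓ∞`. -/
def BanachLimits : Set (LInf →L[ℝ] ℝ) := {B | IsBanachLimit B}

/-- An extended limit: a positive continuous linear functional on `ℓ∞` which agrees with
the limit on every convergent sequence. -/
def IsExtendedLimit (γ : LInf →L[ℝ] ℝ) : Prop :=
  (∀ x : LInf, (∀ n, 0 ≤ x n) → 0 ≤ γ x) ∧
    ∀ (x : LInf) (a : ℝ), Filter.Tendsto (fun n => x n) Filter.atTop (nhds a) → γ x = a

open Topology

lemma shift_apply (x : LInf) (n : ℕ) : shift x n = if n = 0 then 0 else x (n - 1) := rfl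

lemma shift_iterate_apply (K : ℕ) (x : LInf) (n : ℕ) :
    shift^[K] x n = if n < K then 0 else x (n - K) := by
  induction K generalizing n with
  | zero => simp
  | succ K ih =>
    rw [Function.iterate_succ_apply', shift_apply]
    rcases n with _ | n
    · simp
    · simp [ih, Nat.add_sub_add_right]

namespace IsBanachLimit

variable {B : LInf →L[ℝ] ℝ}

lemma mono (hB : IsBanachLimit B) {x y : LInf} (h : ∀ n, x n ≤ y n) : B x ≤ B y := by
  have := hB.1 (y - x) fun n => by simpa using h n
  rw [map_sub] at this
  linarith

lemma abs_apply_le (hB : IsBanachLimit B) {x y : LInf} (h : ∀ n, |x n| ≤ y n) :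
    |B x| ≤ B y := by
  refine abs_le.2 ⟨?_, hB.mono fun n => le_of_abs_le (h n)⟩
  rw [neg_le, ← map_neg]
  exact hB.mono fun n => (neg_le_abs _).trans (h n)

lemma abs_apply_mul_le (hB : IsBanachLimit B) {m : LInf} (hm : ∀ n, 0 ≤ m n) (x : LInf) :
    |B (m * x)| ≤ ‖x‖ * B m := by
  calc |B (m * x)| ≤ B (‖x‖ • m) := hB.abs_apply_le fun n => by
        rw [coe_mul, Pi.mul_apply, abs_mul, abs_of_nonneg (hm n), mul_comm]
        simpa using mul_le_mul_of_nonneg_right (x.norm_coe_le_norm n) (hm n)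
    _ = ‖x‖ * B m := by rw [map_smul, smul_eq_mul]

lemma apply_shift_iterate (hB : IsBanachLimit B) (K : ℕ) (x : LInf) :
    B (shift^[K] x) = B x := by
  induction K with
  | zero => rfl
  | succ K ih => rw [Function.iterate_succ_apply', hB.2.2, ih]

lemma apply_eq_zero_of_tendsto (hB : IsBanachLimit B) {y : LInf}
    (hy : Tendsto y atTop (𝓝 0)) : B y = 0 := by
  refine abs_nonpos_iff.1 (le_of_forall_pos_le_add fun ε hε => ?_)
  obtain ⟨K, hK⟩ := Metric.tendsto_atTop.1 hy ε hε
  -- `1 - shift^[K] 1` is the indicator of `[0, K)`, and `B` kills it.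
  have hhead : B (1 - shift^[K] 1) = 0 := by
    rw [map_sub, hB.apply_shift_iterate, sub_self]
  calc |B y| ≤ B (‖y‖ • (1 - shift^[K] 1) + ε • 1) := hB.abs_apply_le fun n => by
        by_cases hn : n < K
        · simpa [shift_iterate_apply, hn] using
            (y.norm_coe_le_norm n).trans (le_add_of_nonneg_right hε.le)
        · simpa [shift_iterate_apply, hn] using (hK n (not_lt.1 hn)).le
    _ = 0 + ε := by simp [map_add, map_smul, hhead, hB.2.1]

lemma apply_mul_shift (hB : IsBanachLimit B) {m : LInf}
    (hm : Tendsto (fun k => m (k + 1) - m k) atTop (𝓝 0)) (x : LInf) :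
    B (m * shift x) = B (m * x) := by
  have hnull : Tendsto (m * shift x - shift (m * x)) atTop (𝓝 0) := by
    refine (tendsto_add_atTop_iff_nat 1).1 ?_
    have hx : IsBoundedUnder (· ≤ ·) atTop ((‖·‖) ∘ x) :=
      isBoundedUnder_of ⟨‖x‖, x.norm_coe_le_norm⟩
    refine (hm.zero_mul_isBoundedUnder_le hx).congr fun k => ?_
    simp only [coe_sub, coe_mul, Pi.sub_apply, Pi.mul_apply, shift_apply, Nat.add_eq_zero_iff,
      one_ne_zero, and_false, ↓reduceIte, add_tsub_cancel_right]
    ring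
  rw [← hB.2.2 (m * x), ← sub_eq_zero, ← map_sub, hB.apply_eq_zero_of_tendsto hnull]

lemma smul_comp_mul {m : LInf} (hB : IsBanachLimit B) (hm0 : ∀ n, 0 ≤ m n)
    (hm : Tendsto (fun k => m (k + 1) - m k) atTop (𝓝 0)) (hBm : B m ≠ 0) :
    IsBanachLimit ((B m)⁻¹ • B.comp (ContinuousLinearMap.mul ℝ LInf m)) := by
  refine ⟨fun x hx => ?_, ?_, fun x => ?_⟩
  · simpa using mul_nonneg (inv_nonneg.2 (hB.1 m hm0))
      (hB.1 (m * x) fun n => by simpa using mul_nonneg (hm0 n) (hx n))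
  · simp [hBm]
  · simp [hB.apply_mul_shift hm]

end IsBanachLimit

lemma apply_mul_eq_of_mem_extremePoints {B : LInf →L[ℝ] ℝ}
    (hB : B ∈ Set.extremePoints ℝ BanachLimits) {m : LInf} (hm0 : ∀ n, 0 ≤ m n)
    (hm1 : ∀ n, m n ≤ 1) (hm : Tendsto (fun k => m (k + 1) - m k) atTop (𝓝 0)) (x : LInf) :
    B (m * x) = B m * B x := by
  have hBL : IsBanachLimit B := hB.1
  have hm0' : ∀ n, 0 ≤ (1 - m) n := fun n => by simpa using hm1 n
  have hm' : Tendsto (fun k => (1 - m) (k + 1) - (1 - m) k) atTop (𝓝 0) := by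
    simpa [neg_sub] using hm.neg
  have hcompl : B (1 - m) = 1 - B m := by rw [map_sub, hBL.2.1]
  rcases (hBL.1 m hm0).eq_or_lt with h0 | h0
  · have := hBL.abs_apply_mul_le hm0 x
    rw [← h0, mul_zero] at this
    rw [← h0, zero_mul, abs_nonpos_iff.1 this]
  rcases (hBL.mono hm1 : B m ≤ B 1).eq_or_lt with h1 | h1
  · have := hBL.abs_apply_mul_le hm0' x
    rw [hcompl, ← hBL.2.1, h1, sub_self, mul_zero, abs_nonpos_iff, sub_mul, one_mul,
      map_sub, sub_eq_zero] at this
    rw [← this, h1, hBL.2.1, one_mul]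
  rw [hBL.2.1] at h1
  have hB₁ := hBL.smul_comp_mul hm0 hm h0.ne'
  have hB₂ := hBL.smul_comp_mul hm0' hm' (by rw [hcompl]; linarith)
  have hseg : B ∈ openSegment ℝ ((B m)⁻¹ • B.comp (ContinuousLinearMap.mul ℝ LInf m))
      ((B (1 - m))⁻¹ • B.comp (ContinuousLinearMap.mul ℝ LInf (1 - m))) := by
    refine ⟨B m, B (1 - m), h0, by linarith, by linarith, ?_⟩
    ext y
    have hne : B (1 - m) ≠ 0 := by linarith
    simp only [_root_.add_apply, _root_.smul_apply,
      ContinuousLinearMap.comp_apply, ContinuousLinearMap.mul_apply', smul_eq_mul]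
    rw [mul_inv_cancel_left₀ h0.ne', mul_inv_cancel_left₀ hne, ← map_add, ← add_mul,
      add_sub_cancel, one_mul]
  have := congrArg (· x) ((mem_extremePoints.1 hB).2 _ hB₁ _ hB₂ hseg).1
  simp only [_root_.smul_apply, ContinuousLinearMap.comp_apply,
    ContinuousLinearMap.mul_apply', smul_eq_mul] at this
  rw [← this, mul_inv_cancel_left₀ h0.ne']

namespace IsExtendedLimit

variable {γ : LInf →L[ℝ] ℝ}

lemma apply_smul_one (hγ : IsExtendedLimit γ) (c : ℝ) : γ (c • 1) = c :=
  hγ.2 _ c (by simp)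

lemma apply_eq_of_tendsto_sub (hγ : IsExtendedLimit γ) {u w : LInf}
    (h : Tendsto (fun n => u n - w n) atTop (𝓝 0)) : γ u = γ w := by
  have := hγ.2 (u - w) 0 (by simpa using h)
  rwa [map_sub, sub_eq_zero] at this

lemma le_apply_of_eventually_le (hγ : IsExtendedLimit γ) {x : LInf} {c : ℝ}
    (h : ∀ᶠ n in atTop, c ≤ x n) : c ≤ γ x := by
  have hsup : γ (x ⊔ c • 1) = γ x := hγ.apply_eq_of_tendsto_sub <|
    tendsto_const_nhds.congr' <| h.mono fun n hn => by simp [hn]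
  have := hγ.1 (x ⊔ c • 1 - c • 1) fun n => by simp
  rwa [map_sub, hsup, hγ.apply_smul_one, sub_nonneg] at this

lemma sq_apply_le (hγ : IsExtendedLimit γ) (x : LInf) : γ x ^ 2 ≤ γ (x * x) := by
  have hvar : (x - γ x • 1) * (x - γ x • 1) = x * x - (2 * γ x) • x + (γ x ^ 2) • 1 := by
    ext n
    simp only [coe_add, coe_sub, coe_mul, coe_smul, coe_one, Pi.add_apply, Pi.sub_apply,
      Pi.mul_apply, Pi.one_apply, smul_eq_mul]
    ring
  have := hγ.1 ((x - γ x • 1) * (x - γ x • 1)) fun n => by simpa using mul_self_nonneg _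
  rw [hvar, map_add, map_sub, map_smul, hγ.apply_smul_one, smul_eq_mul] at this
  nlinarith

end IsExtendedLimit

def abelMean (r : ℝ) (x : ℕ → ℝ) : ℝ := (1 - r) * ∑' k, x k * r ^ k

section AbelMean

variable {r : ℝ}

lemma summable_mul_pow {x : ℕ → ℝ} {C : ℝ} (hx : ∀ k, ‖x k‖ ≤ C) (hr0 : 0 ≤ r)
    (hr1 : r < 1) : Summable fun k => x k * r ^ k :=
  .of_norm_bounded ((summable_geometric_of_lt_one hr0 hr1).mul_left C) fun k => by
    rw [norm_mul, norm_pow, Real.norm_of_nonneg hr0]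
    exact mul_le_mul_of_nonneg_right (hx k) (by positivity)

lemma abelMean_const (hr0 : 0 ≤ r) (hr1 : r < 1) (c : ℝ) : abelMean r (fun _ => c) = c := by
  rw [abelMean, tsum_mul_left, tsum_geometric_of_lt_one hr0 hr1]
  field_simp [(sub_pos.2 hr1).ne']

lemma abelMean_nonneg (hr0 : 0 ≤ r) (hr1 : r ≤ 1) {x : ℕ → ℝ} (hx : ∀ k, 0 ≤ x k) :
    0 ≤ abelMean r x :=
  mul_nonneg (sub_nonneg.2 hr1) (tsum_nonneg fun k => mul_nonneg (hx k) (pow_nonneg hr0 k))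

lemma abelMean_mono (hr0 : 0 ≤ r) (hr1 : r < 1) {x y : ℕ → ℝ} {C : ℝ}
    (hx : ∀ k, ‖x k‖ ≤ C) (hy : ∀ k, ‖y k‖ ≤ C) (hxy : ∀ k, x k ≤ y k) :
    abelMean r x ≤ abelMean r y :=
  mul_le_mul_of_nonneg_left
    ((summable_mul_pow hx hr0 hr1).tsum_le_tsum
      (fun k => mul_le_mul_of_nonneg_right (hxy k) (pow_nonneg hr0 k))
      (summable_mul_pow hy hr0 hr1))
    (sub_nonneg.2 hr1.le)

lemma abelMean_shift (hr0 : 0 ≤ r) (hr1 : r < 1) (x : LInf) :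
    abelMean r (shift x) = r * abelMean r x := by
  rw [abelMean, abelMean,
    (summable_mul_pow (shift x).norm_coe_le_norm hr0 hr1).tsum_eq_zero_add]
  simp only [shift_apply, if_pos, Nat.add_sub_cancel, Nat.succ_ne_zero, if_false, pow_succ,
    zero_mul, zero_add, ← mul_assoc, tsum_mul_right]
  ring

lemma abelMean_sub_sq (hr0 : 0 ≤ r) (hr1 : r < 1) {x : ℕ → ℝ} {C : ℝ}
    (hx : ∀ k, ‖x k‖ ≤ C) (c : ℝ) :
    abelMean r (fun k => (x k - c) ^ 2) =
      abelMean r (fun k => x k ^ 2) - 2 * c * abelMean r x + c ^ 2 := by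
  have h1 := summable_mul_pow hx hr0 hr1
  have h2 : Summable fun k => x k ^ 2 * r ^ k := summable_mul_pow (C := C ^ 2)
    (fun k => by rw [norm_pow]; exact pow_le_pow_left₀ (norm_nonneg _) (hx k) 2) hr0 hr1
  have h0 := summable_geometric_of_lt_one hr0 hr1
  have hexpand : (fun k => (x k - c) ^ 2 * r ^ k) =
      fun k => x k ^ 2 * r ^ k - 2 * c * (x k * r ^ k) + c ^ 2 * r ^ k := by
    funext k; ring
  simp only [abelMean]
  rw [hexpand, (h2.sub (h1.mul_left _)).tsum_add (h0.mul_left _), h2.tsum_sub (h1.mul_left _),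
    tsum_mul_left, tsum_mul_left, tsum_geometric_of_lt_one hr0 hr1]
  field_simp [(sub_pos.2 hr1).ne']

lemma card_Ico_mul_le_sum_pow (hr0 : 0 ≤ r) (hr1 : r ≤ 1) (lo hi : ℕ) (h : lo ≤ hi) :
    ((hi : ℝ) - lo) * (1 - hi * (1 - r)) ≤ ∑ k ∈ Finset.Ico lo hi, r ^ k := by
  have hterm : ∀ k ∈ Finset.Ico lo hi, 1 - hi * (1 - r) ≤ r ^ k := fun k hk => by
    have hk : (k : ℝ) ≤ hi := by exact_mod_cast (Finset.mem_Ico.1 hk).2.le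
    have := one_add_mul_sub_le_pow (by linarith : -1 ≤ r) k
    nlinarith [mul_le_mul_of_nonneg_right hk (sub_nonneg.2 hr1)]
  have := Finset.card_nsmul_le_sum _ _ _ hterm
  rwa [Nat.card_Ico, nsmul_eq_mul, Nat.cast_sub h] at this

lemma le_abelMean_sub_sq (hr0 : 0 ≤ r) (hr1 : r < 1) {x : ℕ → ℝ} {C : ℝ}
    (hx : ∀ k, ‖x k‖ ≤ C) {a b μ : ℝ} (hab : a ≤ b) {J K : Finset ℕ}
    (hJ : ∀ k ∈ J, b ≤ x k) (hK : ∀ k ∈ K, x k ≤ a)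
    (hμJ : μ ≤ (1 - r) * ∑ k ∈ J, r ^ k) (hμK : μ ≤ (1 - r) * ∑ k ∈ K, r ^ k) (c : ℝ) :
    ((b - a) / 2) ^ 2 * μ ≤ abelMean r (fun k => (x k - c) ^ 2) := by
  have hsq : Summable fun k => (x k - c) ^ 2 * r ^ k := summable_mul_pow (C := (C + |c|) ^ 2)
    (fun k => by
      rw [norm_pow]
      exact pow_le_pow_left₀ (norm_nonneg _)
        ((norm_sub_le _ _).trans (add_le_add (hx k) (Real.norm_eq_abs c).le)) 2) hr0 hr1
  have hwindow : ∀ S : Finset ℕ, (∀ k ∈ S, ((b - a) / 2) ^ 2 ≤ (x k - c) ^ 2) →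
      μ ≤ (1 - r) * ∑ k ∈ S, r ^ k →
        ((b - a) / 2) ^ 2 * μ ≤ abelMean r (fun k => (x k - c) ^ 2) := by
    intro S hS hμS
    calc ((b - a) / 2) ^ 2 * μ ≤ (1 - r) * ∑ k ∈ S, ((b - a) / 2) ^ 2 * r ^ k := by
          rw [← Finset.mul_sum]
          nlinarith [sq_nonneg ((b - a) / 2)]
      _ ≤ (1 - r) * ∑ k ∈ S, (x k - c) ^ 2 * r ^ k :=
          mul_le_mul_of_nonneg_left (Finset.sum_le_sum fun k hk =>
            mul_le_mul_of_nonneg_right (hS k hk) (pow_nonneg hr0 k)) (sub_nonneg.2 hr1.le)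
      _ ≤ abelMean r (fun k => (x k - c) ^ 2) :=
          mul_le_mul_of_nonneg_left (hsq.sum_le_tsum S fun k _ =>
            mul_nonneg (sq_nonneg _) (pow_nonneg hr0 k)) (sub_nonneg.2 hr1.le)
  rcases le_total c ((a + b) / 2) with hc | hc
  · exact hwindow J (fun k hk => pow_le_pow_left₀ (by linarith) (by linarith [hJ k hk]) 2) hμJ
  · exact hwindow K (fun k hk => by nlinarith [hK k hk]) hμK

end AbelMean

section LogWave

open Real

lemma half_le_cos_of_abs_le {x : ℝ} (h : |x| ≤ π / 3) : 1 / 2 ≤ cos x := by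
  rw [← cos_abs, ← cos_pi_div_three]
  exact cos_le_cos_of_nonneg_of_le_pi (abs_nonneg x) (by linarith [pi_pos]) h

lemma natCast_mul_logb_two_le {y : ℝ} (hy : 0 < y) {n m : ℕ} (h : y ^ n ≤ 2 ^ m) :
    n * logb 2 y ≤ m := by
  rw [← logb_pow, ← mul_one (m : ℝ), ← logb_self_eq_one one_lt_two, ← logb_pow]
  exact logb_le_logb_of_le one_lt_two (pow_pos hy n) h

lemma le_natCast_mul_logb_two {y : ℝ} {n m : ℕ} (h : 2 ^ m ≤ y ^ n) :
    m ≤ n * logb 2 y := by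
  rw [← logb_pow, ← mul_one (m : ℝ), ← logb_self_eq_one one_lt_two, ← logb_pow]
  exact logb_le_logb_of_le one_lt_two (by positivity) h

def logWave : LInf :=
  BoundedContinuousFunction.ofNormedAddCommGroup
    (fun k => (1 + cos (2 * π * logb 2 ((k : ℝ) + 1))) / 2) continuous_of_discreteTopology 1
    fun k => by
      rw [Real.norm_eq_abs, abs_le]
      constructor <;>
        linarith [neg_one_le_cos (2 * π * logb 2 ((k : ℝ) + 1)),
          cos_le_one (2 * π * logb 2 ((k : ℝ) + 1))]

lemma logWave_apply (k : ℕ) : logWave k = (1 + cos (2 * π * logb 2 ((k : ℝ) + 1))) / 2 := rfl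

lemma logWave_nonneg (k : ℕ) : 0 ≤ logWave k := by
  rw [logWave_apply]
  linarith [neg_one_le_cos (2 * π * logb 2 ((k : ℝ) + 1))]

lemma logWave_le_one (k : ℕ) : logWave k ≤ 1 := by
  rw [logWave_apply]
  linarith [cos_le_one (2 * π * logb 2 ((k : ℝ) + 1))]

lemma norm_logWave_apply_le_one (k : ℕ) : ‖logWave k‖ ≤ 1 := by
  rw [Real.norm_eq_abs, abs_of_nonneg (logWave_nonneg k)]
  exact logWave_le_one k

lemma logWave_eq_of_eq_two_pow_mul {p k : ℕ} {y : ℝ} (hy : 0 < y)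
    (hk : (k : ℝ) + 1 = 2 ^ p * y) : logWave k = (1 + cos (2 * π * logb 2 y)) / 2 := by
  rw [logWave_apply, hk, logb_mul (by positivity) hy.ne', logb_pow, logb_self_eq_one one_lt_two,
    mul_one, show 2 * π * (p + logb 2 y) = 2 * π * logb 2 y + p * (2 * π) by ring,
    cos_add_nat_mul_two_pi]

lemma tendsto_logWave_succ_sub :
    Tendsto (fun k => logWave (k + 1) - logWave k) atTop (𝓝 0) := by
  have hratio : Tendsto (fun k : ℕ => ((k : ℝ) + 1) / ((k : ℝ) + 1 + 1)) atTop (𝓝 1) := by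
    simpa [Function.comp_def] using
      (tendsto_natCast_div_add_atTop (1 : ℝ)).comp (tendsto_add_atTop_nat 1)
  have hbound : Tendsto (fun k : ℕ => π * |logb 2 (((k : ℝ) + 1) / ((k : ℝ) + 1 + 1))|)
      atTop (𝓝 0) := by
    simpa using (((continuousAt_logb one_ne_zero).tendsto.comp hratio).abs.const_mul π)
  refine squeeze_zero_norm (fun k => ?_) hbound
  have hk : (0 : ℝ) < (k : ℝ) + 1 := by positivity
  have h := abs_cos_sub_cos_le (2 * π * logb 2 ((k : ℝ) + 1)) (2 * π * logb 2 ((k : ℝ) + 1 + 1))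
  rw [← mul_sub, abs_mul, ← logb_div hk.ne' (by positivity),
    abs_of_pos (by positivity : (0 : ℝ) < 2 * π)] at h
  rw [logWave_apply, logWave_apply, Real.norm_eq_abs, Nat.cast_succ,
    show ∀ a b : ℝ, (1 + a) / 2 - (1 + b) / 2 = -(b - a) / 2 by intros; ring, abs_div, abs_neg,
    abs_two]
  linarith

lemma three_quarters_le_logWave {q k : ℕ} (hk : k ∈ Finset.Ico (16 * 2 ^ q) (17 * 2 ^ q)) :
    3 / 4 ≤ logWave k := by
  obtain ⟨hlo, hhi⟩ := Finset.mem_Ico.1 hk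
  have hlo' : (16 : ℝ) * 2 ^ q ≤ k := by exact_mod_cast hlo
  have hhi' : (k : ℝ) + 1 ≤ 17 * 2 ^ q := by exact_mod_cast hhi
  set y := ((k : ℝ) + 1) / 2 ^ (q + 4)
  have hpow : (2 : ℝ) ^ (q + 4) = 16 * 2 ^ q := by ring
  have hy1 : 1 ≤ y := by rw [le_div_iff₀ (by positivity)]; linarith
  have hy2 : y ≤ 17 / 16 := by rw [div_le_iff₀ (by positivity)]; linarith
  have ht0 : 0 ≤ logb 2 y := logb_nonneg one_lt_two hy1
  have ht1 := natCast_mul_logb_two_le (n := 6) (m := 1) (by linarith) <|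
    (pow_le_pow_left₀ (by linarith) hy2 6).trans (by norm_num)
  have hcos := half_le_cos_of_abs_le (x := 2 * π * logb 2 y) <| by
    rw [abs_of_nonneg (by positivity)]
    push_cast at ht1
    nlinarith [pi_pos]
  rw [logWave_eq_of_eq_two_pow_mul (p := q + 4) (y := y) (by linarith)
    (by simp only [y]; field_simp)]
  linarith

lemma logWave_le_one_quarter {q k : ℕ} (hk : k ∈ Finset.Ico (23 * 2 ^ q) (24 * 2 ^ q)) :
    logWave k ≤ 1 / 4 := by
  obtain ⟨hlo, hhi⟩ := Finset.mem_Ico.1 hk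
  have hlo' : (23 : ℝ) * 2 ^ q ≤ k := by exact_mod_cast hlo
  have hhi' : (k : ℝ) + 1 ≤ 24 * 2 ^ q := by exact_mod_cast hhi
  set y := ((k : ℝ) + 1) / 2 ^ (q + 4)
  have hpow : (2 : ℝ) ^ (q + 4) = 16 * 2 ^ q := by ring
  have hy1 : 23 / 16 ≤ y := by rw [le_div_iff₀ (by positivity)]; linarith
  have hy2 : y ≤ 3 / 2 := by rw [div_le_iff₀ (by positivity)]; linarith
  have ht0 := le_natCast_mul_logb_two (n := 3) (m := 1) <|
    (show (2 : ℝ) ^ 1 ≤ (23 / 16) ^ 3 by norm_num).trans (pow_le_pow_left₀ (by norm_num) hy1 3)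
  have ht1 := natCast_mul_logb_two_le (n := 3) (m := 2) (by linarith) <|
    (pow_le_pow_left₀ (by linarith) hy2 3).trans (by norm_num)
  have hcos := half_le_cos_of_abs_le (x := 2 * π * logb 2 y - π) <| by
    push_cast at ht0 ht1
    rw [abs_le]
    constructor <;> nlinarith [pi_pos]
  rw [cos_sub_pi] at hcos
  rw [logWave_eq_of_eq_two_pow_mul (p := q + 4) (y := y) (by linarith)
    (by simp only [y]; field_simp)]
  linarith

end LogWave

lemma eventually_le_abelMean_sq_sub_sq_logWave :
    ∀ᶠ r in 𝓝[<] 1, 1 / 3072 ≤ abelMean r (fun k => logWave k ^ 2) - abelMean r logWave ^ 2 := by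
  filter_upwards [Ioo_mem_nhdsLT (show (47 / 48 : ℝ) < 1 by norm_num)] with r ⟨hr47, hr1⟩
  have hs : 0 < 1 - r := sub_pos.2 hr1
  have hr0 : 0 ≤ r := by linarith
  -- Windows of length `2 ^ q ≈ 1 / (1 - r)` carry Abel mass bounded away from `0`.
  obtain ⟨q, hq1, hq2⟩ := exists_nat_pow_near (x := 1 / (48 * (1 - r))) (y := 2)
    (by rw [le_div_iff₀ (by positivity)]; linarith) one_lt_two
  have hd1 : (1 - r) * 2 ^ q ≤ 1 / 48 := by
    rw [le_div_iff₀ (by positivity)] at hq1; linarith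
  have hd2 : 1 / 96 < (1 - r) * 2 ^ q := by
    rw [div_lt_iff₀ (by positivity), pow_succ] at hq2; linarith
  have hmass : ∀ c : ℕ, c ≤ 23 →
      1 / 192 ≤ (1 - r) * ∑ k ∈ Finset.Ico (c * 2 ^ q) ((c + 1) * 2 ^ q), r ^ k := by
    intro c hc
    have hc' : (c : ℝ) + 1 ≤ 24 := by exact_mod_cast Nat.succ_le_succ hc
    have h := card_Ico_mul_le_sum_pow hr0 hr1.le (c * 2 ^ q) ((c + 1) * 2 ^ q)
      (Nat.mul_le_mul_right _ c.le_succ)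
    push_cast at h
    have h' := mul_le_mul_of_nonneg_left h hs.le
    nlinarith [mul_le_mul_of_nonneg_left hc' (by positivity : (0 : ℝ) ≤ ((1 - r) * 2 ^ q) ^ 2)]
  have hvar := le_abelMean_sub_sq hr0 hr1 norm_logWave_apply_le_one
    (by norm_num : (1 : ℝ) / 4 ≤ 3 / 4) (fun k hk => three_quarters_le_logWave hk)
    (fun k hk => logWave_le_one_quarter hk) (hmass 16 (by norm_num)) (hmass 23 le_rfl)
    (abelMean r logWave)
  rw [abelMean_sub_sq hr0 hr1 norm_logWave_apply_le_one] at hvar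
  linarith

section AbelBanachLimit

variable {γ B : LInf →L[ℝ] ℝ} {W : LInf → LInf} {r v : ℕ → ℝ}

lemma isBanachLimit_of_abelMean (hγ : IsExtendedLimit γ) (hr : Tendsto r atTop (𝓝[<] 1))
    (hv : Tendsto v atTop (𝓝 1)) (hW : ∀ x n, W x n = v n * abelMean (r n) x)
    (hB : ∀ x, B x = γ (W x)) : IsBanachLimit B := by
  have hr' := hr.eventually (Ioo_mem_nhdsLT zero_lt_one)
  have hv' := hv.eventually_const_lt zero_lt_one
  refine ⟨fun x hx => ?_, ?_, fun x => ?_⟩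
  · rw [hB]
    refine hγ.le_apply_of_eventually_le ?_
    filter_upwards [hr', hv'] with n ⟨h0, h1⟩ hvn
    rw [hW]
    exact mul_nonneg hvn.le (abelMean_nonneg h0.le h1.le hx)
  · rw [hB]
    refine hγ.2 _ 1 (hv.congr' ?_)
    filter_upwards [hr'] with n ⟨h0, h1⟩
    rw [hW, show abelMean (r n) (1 : LInf) = 1 from abelMean_const h0.le h1 1, mul_one]
  · rw [hB, hB]
    refine hγ.apply_eq_of_tendsto_sub ?_
    have hdecay : Tendsto (fun n => (r n - 1) * W x n) atTop (𝓝 0) :=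
      (tendsto_sub_nhds_zero_iff.2 (tendsto_nhds_of_tendsto_nhdsWithin hr)
        ).zero_mul_isBoundedUnder_le (isBoundedUnder_of ⟨‖W x‖, (W x).norm_coe_le_norm⟩)
    refine hdecay.congr' ?_
    filter_upwards [hr'] with n ⟨h0, h1⟩
    rw [hW, hW, abelMean_shift h0.le h1]
    ring

lemma sq_apply_logWave_lt_of_abelMean (hγ : IsExtendedLimit γ)
    (hr : Tendsto r atTop (𝓝[<] 1)) (hv : Tendsto v atTop (𝓝 1))
    (hW : ∀ x n, W x n = v n * abelMean (r n) x) (hB : ∀ x, B x = γ (W x)) :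
    B logWave ^ 2 < B (logWave * logWave) := by
  have hr' := hr.eventually (Ioo_mem_nhdsLT zero_lt_one)
  have hvar := hr.eventually eventually_le_abelMean_sq_sub_sq_logWave
  have hlim : Tendsto (fun n => v n * (1 / 3072) - |v n - v n ^ 2|) atTop (𝓝 (1 / 3072)) := by
    have := (hv.mul_const (1 / 3072)).sub (hv.sub (hv.pow 2)).abs
    rwa [one_mul, one_pow, sub_self, abs_zero, sub_zero] at this
  have hgap : 1 / 6144 ≤ γ (W (logWave * logWave) - W logWave * W logWave) := by
    refine hγ.le_apply_of_eventually_le ?_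
    filter_upwards [hr', hvar, hlim.eventually_const_lt (by norm_num : (1 : ℝ) / 6144 < 1 / 3072),
      hv.eventually_const_lt zero_lt_one] with n ⟨h0, h1⟩ hvarn hlimn hvn
    have hE0 : 0 ≤ abelMean (r n) logWave := abelMean_nonneg h0.le h1.le logWave_nonneg
    have hE1 : abelMean (r n) logWave ≤ 1 :=
      (abelMean_mono h0.le h1 norm_logWave_apply_le_one (fun _ => by norm_num)
        logWave_le_one).trans_eq (abelMean_const h0.le h1 1)
    have hsq : ⇑(logWave * logWave) = fun k => logWave k ^ 2 := by
      ext k; simp [sq]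
    rw [coe_sub, Pi.sub_apply, hW, hsq, coe_mul, Pi.mul_apply, hW]
    -- `v E[m²] - (v E[m])² = v (E[m²] - E[m]²) + (v - v²) E[m]²` with `0 ≤ E[m] ≤ 1`.
    have hdev : -|v n - v n ^ 2| ≤ (v n - v n ^ 2) * abelMean (r n) logWave ^ 2 := by
      refine le_trans ?_ (neg_abs_le _)
      rw [neg_le_neg_iff, abs_mul, abs_of_nonneg (sq_nonneg (abelMean (r n) logWave))]
      exact mul_le_of_le_one_right (abs_nonneg _) (pow_le_one₀ hE0 hE1)
    nlinarith [mul_le_mul_of_nonneg_left hvarn hvn.le]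
  have hcs := hγ.sq_apply_le (W logWave)
  rw [hB, hB]
  rw [map_sub] at hgap
  linarith

lemma notMem_extremePoints_of_abelMean (hγ : IsExtendedLimit γ)
    (hr : Tendsto r atTop (𝓝[<] 1)) (hv : Tendsto v atTop (𝓝 1))
    (hW : ∀ x n, W x n = v n * abelMean (r n) x) (hB : ∀ x, B x = γ (W x)) :
    B ∉ Set.extremePoints ℝ BanachLimits := fun hext => by
  have hlt := sq_apply_logWave_lt_of_abelMean hγ hr hv hW hB
  rw [apply_mul_eq_of_mem_extremePoints hext logWave_nonneg logWave_le_one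
    tendsto_logWave_succ_sub logWave, sq] at hlt
  exact lt_irrefl _ hlt

end AbelBanachLimit

def zetaRatio (n : ℕ) : ℝ := 2 ^ (-((n : ℝ) + 1)⁻¹)

def zetaScale (n : ℕ) : ℝ := Real.log 2 / (((n : ℝ) + 1) * (1 - zetaRatio n))

lemma two_rpow_neg_div_eq_zetaRatio_pow (n k : ℕ) :
    (2 : ℝ) ^ (-(k : ℝ) / ((n : ℝ) + 1)) = zetaRatio n ^ k := by
  rw [zetaRatio, ← Real.rpow_natCast, ← Real.rpow_mul (by norm_num)]
  congr 1
  ring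

lemma zetaRatio_lt_one (n : ℕ) : zetaRatio n < 1 :=
  Real.rpow_lt_one_of_one_lt_of_neg one_lt_two (neg_neg_of_pos (by positivity))

lemma tendsto_inv_natCast_add_one_nhdsGT :
    Tendsto (fun n : ℕ => ((n : ℝ) + 1)⁻¹) atTop (𝓝[>] 0) :=
  tendsto_nhdsWithin_iff.2 ⟨by simpa using tendsto_one_div_add_atTop_nhds_zero_nat (𝕜 := ℝ),
    Eventually.of_forall fun n => by simp only [Set.mem_Ioi]; positivity⟩

lemma tendsto_zetaRatio : Tendsto zetaRatio atTop (𝓝[<] 1) := by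
  refine tendsto_nhdsWithin_iff.2 ⟨?_, Eventually.of_forall zetaRatio_lt_one⟩
  have hexp : Tendsto (fun n : ℕ => -((n : ℝ) + 1)⁻¹) atTop (𝓝 0) := by
    simpa using (tendsto_nhds_of_tendsto_nhdsWithin tendsto_inv_natCast_add_one_nhdsGT).neg
  have := (Real.continuousAt_const_rpow (b := 0) two_ne_zero).tendsto.comp hexp
  rwa [Real.rpow_zero] at this

lemma tendsto_zetaScale : Tendsto zetaScale atTop (𝓝 1) := by
  have hderiv : HasDerivAt (fun t : ℝ => (2 : ℝ) ^ (-t)) (-Real.log 2) 0 := by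
    simpa using (hasDerivAt_neg (0 : ℝ)).const_rpow two_pos
  have hlog : Real.log 2 ≠ 0 := (Real.log_pos one_lt_two).ne'
  have := (tendsto_const_nhds (x := Real.log 2)).div
    (hderiv.tendsto_slope_zero_right.comp tendsto_inv_natCast_add_one_nhdsGT).neg
    (by simpa using hlog)
  rw [neg_neg, div_self hlog] at this
  refine this.congr fun n => ?_
  simp only [zero_add, neg_zero, Real.rpow_zero, smul_eq_mul, Function.comp_apply, inv_inv,
    Pi.div_apply, zetaScale, zetaRatio]
  ring

theorem zeta_banach_limit_not_extreme (γ : LInf →L[ℝ] ℝ) (hγ : IsExtendedLimit γ)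
    (Z : LInf → LInf)
    (hZ : ∀ (x : LInf) (n : ℕ),
      Z x n = (((n : ℝ) + 1))⁻¹ * ∑' k : ℕ, x k * (2 : ℝ) ^ (-(k : ℝ) / ((n : ℝ) + 1)))
    (B : LInf →L[ℝ] ℝ) (hB : ∀ x : LInf, B x = Real.log 2 * γ (Z x)) :
    IsBanachLimit B ∧ B ∉ Set.extremePoints ℝ BanachLimits := by
  have hW : ∀ x n, (Real.log 2 • Z x) n = zetaScale n * abelMean (zetaRatio n) x := by
    intro x n
    have hs : 1 - zetaRatio n ≠ 0 := (sub_pos.2 (zetaRatio_lt_one n)).ne'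
    simp only [coe_smul, smul_eq_mul, hZ, two_rpow_neg_div_eq_zetaRatio_pow, zetaScale, abelMean]
    field_simp
  have hB' : ∀ x, B x = γ (Real.log 2 • Z x) := fun x => by rw [hB, map_smul, smul_eq_mul]
  exact ⟨isBanachLimit_of_abelMean hγ tendsto_zetaRatio tendsto_zetaScale hW hB',
    notMem_extremePoints_of_abelMean hγ tendsto_zetaRatio tendsto_zetaScale hW hB'⟩

end
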